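/- arXiv:1906.04845 — 2 statements merged into one kernel-verified Lean document; each statement's English description precedes it below -/
import Mathlib

section
/- Suppose that for every set of m points from X there exist signs σ ∈ {-1,1}^m with |∑_i σ_i f(x_i, q)| ≤ m·D_m for all q ∈ Q, where D_m ≤ c/m. Then for any n points there exists a weighted subset S of size at most O(c/ε) with weights w_i ≥ 0 such that |∑_{i=1}^n f(x_i, q) − ∑_{i ∈ S} w_i f(x_i, q)| ≤ εn for all q ∈ Q simultaneously. -/
open Finset

/-- One halving step: using the discrepancy signs, we can keep at most half of the
points of `S` (with weight `2`) while incurring error at most `c`. -/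
theorem halve_step {X Q : Type} (f : X → Q → ℝ) (c : ℝ)
    (hdisc : ∀ (m : ℕ) (y : Fin m → X), ∃ σ : Fin m → ℝ,
        (∀ i, σ i = 1 ∨ σ i = -1) ∧ ∀ q, |∑ i, σ i * f (y i) q| ≤ c)
    {n : ℕ} (x : Fin n → X) (S : Finset (Fin n)) :
    ∃ S' : Finset (Fin n), S' ⊆ S ∧ 2 * S'.card ≤ S.card ∧
      ∀ q, |∑ i ∈ S, f (x i) q - 2 * ∑ i ∈ S', f (x i) q| ≤ c := by
  classical
  set m := S.card with hm
  set e := S.equivFin with he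
  set g : Fin m → Fin n := fun j => ((e.symm j : S) : Fin n) with hg
  have hg_inj : Function.Injective g := by
    intro a b hab
    exact e.symm.injective (Subtype.val_injective hab)
  obtain ⟨σ, hσ, hq⟩ := hdisc m (fun j => x (g j))
  set P : Finset (Fin m) := univ.filter (fun j => σ j = 1) with hP
  set P' : Finset (Fin m) := univ.filter (fun j => ¬ σ j = 1) with hP'
  have hsumS : ∀ q, ∑ i ∈ S, f (x i) q = ∑ j : Fin m, f (x (g j)) q := by
    intro q
    rw [← Finset.sum_attach S (fun i => f (x i) q), ← Finset.univ_eq_attach]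
    exact (Equiv.sum_comp e.symm (fun i : S => f (x (i : Fin n)) q)).symm
  have hsplitsum : ∀ q, ∑ j : Fin m, f (x (g j)) q
      = ∑ j ∈ P, f (x (g j)) q + ∑ j ∈ P', f (x (g j)) q :=
    fun q => (Finset.sum_filter_add_sum_filter_not univ _ _).symm
  have hsigned : ∀ q, ∑ j : Fin m, σ j * f (x (g j)) q
      = ∑ j ∈ P, f (x (g j)) q - ∑ j ∈ P', f (x (g j)) q := by
    intro q
    rw [← Finset.sum_filter_add_sum_filter_not univ (fun j => σ j = 1)
      (fun j => σ j * f (x (g j)) q)]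
    have h1 : ∑ j ∈ P, σ j * f (x (g j)) q = ∑ j ∈ P, f (x (g j)) q :=
      Finset.sum_congr rfl fun j hj => by
        rw [(Finset.mem_filter.mp hj).2, one_mul]
    have h2 : ∑ j ∈ P', σ j * f (x (g j)) q = ∑ j ∈ P', -f (x (g j)) q :=
      Finset.sum_congr rfl fun j hj => by
        have := (Finset.mem_filter.mp hj).2
        rcases hσ j with h | h
        · exact absurd h this
        · rw [h]; ring
    rw [h1, h2, Finset.sum_neg_distrib]
    ring
  have hcards : P.card + P'.card = m := by
    have := Finset.card_filter_add_card_filter_not (s := (univ : Finset (Fin m)))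
      (p := fun j => σ j = 1)
    simpa [hP, hP', hm] using this
  -- choose the smaller half
  rcases le_total P.card P'.card with hle | hle
  · refine ⟨P.image g, ?_, ?_, ?_⟩
    · intro i hi
      obtain ⟨j, _, rfl⟩ := Finset.mem_image.mp hi
      exact (e.symm j).2
    · rw [Finset.card_image_of_injective _ hg_inj]
      omega
    · intro q
      have habs := hq q
      rw [Finset.sum_image (fun a _ b _ h => hg_inj h)]
      have : ∑ i ∈ S, f (x i) q - 2 * ∑ j ∈ P, f (x (g j)) q
          = -(∑ j : Fin m, σ j * f (x (g j)) q) := by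
        rw [hsumS q, hsplitsum q, hsigned q]; ring
      rw [this, abs_neg]
      exact habs
  · refine ⟨P'.image g, ?_, ?_, ?_⟩
    · intro i hi
      obtain ⟨j, _, rfl⟩ := Finset.mem_image.mp hi
      exact (e.symm j).2
    · rw [Finset.card_image_of_injective _ hg_inj]
      omega
    · intro q
      have habs := hq q
      rw [Finset.sum_image (fun a _ b _ h => hg_inj h)]
      have : ∑ i ∈ S, f (x i) q - 2 * ∑ j ∈ P', f (x (g j)) q
          = ∑ j : Fin m, σ j * f (x (g j)) q := by
        rw [hsumS q, hsplitsum q, hsigned q]; ring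
      rw [this]
      exact habs

/-- Halving trick: class discrepancy `D_m ≤ c/m` yields weighted coresets of size `O(c/ε)`
with additive error `εn`. -/
theorem stmt_3 :
    ∃ C : ℝ, 0 < C ∧
      ∀ (X Q : Type) (f : X → Q → ℝ),
        (∀ x q, f x q ∈ Set.Icc (0 : ℝ) 1) →
        ∀ c : ℝ, 0 < c →
        -- class discrepancy bound: for every m points, signs with error at most m·D_m ≤ c
        (∀ (m : ℕ) (y : Fin m → X), ∃ σ : Fin m → ℝ,
            (∀ i, σ i = 1 ∨ σ i = -1) ∧
            ∀ q, |∑ i, σ i * f (y i) q| ≤ c) →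
        ∀ (ε : ℝ), 0 < ε →
        ∀ (n : ℕ) (x : Fin n → X),
          ∃ (S : Finset (Fin n)) (w : Fin n → ℝ),
            (∀ i, 0 ≤ w i) ∧
            (S.card : ℝ) ≤ C * c / ε ∧
            ∀ q, |∑ i, f (x i) q - ∑ i ∈ S, w i * f (x i) q| ≤ ε * n := by
  refine ⟨2, by norm_num, ?_⟩
  intro X Q f hf c hc hdisc ε hε n x
  -- iterate the halving step
  have iter : ∀ T : ℕ, ∃ S : Finset (Fin n), 2 ^ T * S.card ≤ n ∧
      ∀ q, |∑ i, f (x i) q - (2 : ℝ) ^ T * ∑ i ∈ S, f (x i) q| ≤ ((2 : ℝ) ^ T - 1) * c := by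
    intro T
    induction T with
    | zero =>
      refine ⟨univ, by simp, fun q => by simp⟩
    | succ T ih =>
      obtain ⟨S, hcard, herr⟩ := ih
      obtain ⟨S', _, hcard', herr'⟩ := halve_step f c hdisc x S
      refine ⟨S', ?_, ?_⟩
      · calc 2 ^ (T + 1) * S'.card = 2 ^ T * (2 * S'.card) := by ring
          _ ≤ 2 ^ T * S.card := Nat.mul_le_mul_left _ hcard'
          _ ≤ n := hcard
      · intro q
        have h1 := herr q
        have h2 := herr' q
        have hkey : ∑ i, f (x i) q - (2 : ℝ) ^ (T + 1) * ∑ i ∈ S', f (x i) q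
            = (∑ i, f (x i) q - (2 : ℝ) ^ T * ∑ i ∈ S, f (x i) q)
              + (2 : ℝ) ^ T * (∑ i ∈ S, f (x i) q - 2 * ∑ i ∈ S', f (x i) q) := by
          ring
        rw [hkey]
        have habs := abs_add_le (∑ i, f (x i) q - (2 : ℝ) ^ T * ∑ i ∈ S, f (x i) q)
          ((2 : ℝ) ^ T * (∑ i ∈ S, f (x i) q - 2 * ∑ i ∈ S', f (x i) q))
        have h3 : |(2 : ℝ) ^ T * (∑ i ∈ S, f (x i) q - 2 * ∑ i ∈ S', f (x i) q)|
            ≤ (2 : ℝ) ^ T * c := by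
          rw [abs_mul, abs_of_nonneg (by positivity : (0:ℝ) ≤ (2:ℝ) ^ T)]
          exact mul_le_mul_of_nonneg_left h2 (by positivity)
        calc _ ≤ _ := habs
          _ ≤ ((2 : ℝ) ^ T - 1) * c + (2 : ℝ) ^ T * c := add_le_add h1 h3
          _ = ((2 : ℝ) ^ (T + 1) - 1) * c := by ring
  set k := ⌊ε * n / c⌋₊ with hk
  by_cases hk0 : k = 0
  · -- ε n < c : the whole point set is already small enough
    have hlt : ε * n / c < 1 := by
      by_contra hge
      push_neg at hge
      have hpos : 0 < k := Nat.floor_pos.mpr hge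
      omega
    have hn : (n : ℝ) < c / ε := by
      rw [div_lt_one hc] at hlt
      rw [lt_div_iff₀ hε]
      nlinarith
    refine ⟨univ, fun _ => 1, fun _ => zero_le_one, ?_, ?_⟩
    · simp only [Finset.card_univ, Fintype.card_fin]
      calc (n : ℝ) ≤ c / ε := le_of_lt hn
        _ ≤ 2 * c / ε := by
          have h0 : 0 ≤ c / ε := div_nonneg hc.le hε.le
          rw [mul_div_assoc]
          linarith
    · intro q
      simp only [one_mul]
      have : ∑ i, f (x i) q - ∑ i ∈ univ, f (x i) q = 0 := by simp
      rw [this, abs_zero]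
      positivity
  · set T := Nat.log 2 k with hT
    have h1 : 2 ^ T ≤ k := Nat.pow_log_le_self 2 hk0
    have h2 : k < 2 ^ (T + 1) := Nat.lt_pow_succ_log_self (by norm_num) k
    obtain ⟨S, hcard, herr⟩ := iter T
    have hkle : (k : ℝ) ≤ ε * n / c := Nat.floor_le (by positivity)
    have hklt : ε * n / c < (k : ℝ) + 1 := Nat.lt_floor_add_one _
    have hpow_le : (2 : ℝ) ^ T ≤ ε * n / c := by
      calc (2 : ℝ) ^ T = ((2 ^ T : ℕ) : ℝ) := by push_cast; ring
        _ ≤ (k : ℝ) := by exact_mod_cast h1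
        _ ≤ ε * n / c := hkle
    have hpow_gt : ε * n / c < (2 : ℝ) ^ (T + 1) := by
      calc ε * n / c < (k : ℝ) + 1 := hklt
        _ ≤ ((2 ^ (T + 1) : ℕ) : ℝ) := by exact_mod_cast h2
        _ = (2 : ℝ) ^ (T + 1) := by push_cast; ring
    have hpowpos : (0 : ℝ) < (2 : ℝ) ^ T := by positivity
    refine ⟨S, fun _ => (2 : ℝ) ^ T, fun _ => by positivity, ?_, ?_⟩
    · -- card bound
      have hcardR : (2 : ℝ) ^ T * S.card ≤ n := by
        calc (2 : ℝ) ^ T * S.card = ((2 ^ T * S.card : ℕ) : ℝ) := by push_cast; ring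
          _ ≤ (n : ℝ) := by exact_mod_cast hcard
      -- from hpow_gt : ε n < 2^{T+1} c
      have hn2 : ε * n < 2 ^ (T + 1) * c := by
        rw [div_lt_iff₀ hc] at hpow_gt
        linarith
      rw [le_div_iff₀ hε]
      have : (2 : ℝ) ^ (T + 1) = 2 * 2 ^ T := by ring
      nlinarith [mul_pos hpowpos hc]
    · intro q
      rw [← Finset.mul_sum]
      have herrq := herr q
      have : ((2 : ℝ) ^ T - 1) * c ≤ ε * n := by
        have : (2 : ℝ) ^ T * c ≤ ε * n := by
          rw [le_div_iff₀ hc] at hpow_le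
          linarith
        nlinarith
      linarith
end

section
/- Suppose that for every set of m points from X there exist signs σ with |∑_i σ_i f(x_i, q)| ≤ m·D_m for all q, where D_m ≤ c/√m. Then for any n points there exists a weighted subset of size at most O(c²/ε²) approximating F(q) = ∑_i f(x_i, q) to additive error εn for all q simultaneously. -/
open Finset

lemma halving_aux {X Q : Type} (f : X → Q → ℝ) (c : ℝ) (hc : 0 ≤ c)
    (hdisc : ∀ (m : ℕ) (y : Fin m → X), ∃ σ : Fin m → ℝ,
      (∀ i, σ i = 1 ∨ σ i = -1) ∧ ∀ q, |∑ i, σ i * f (y i) q| ≤ c * Real.sqrt m) :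
    ∀ (T m : ℕ) (y : Fin m → X), ∃ (S : Finset (Fin m)) (w : Fin m → ℝ),
      (∀ i, 0 ≤ w i) ∧ ((S.card : ℝ) ≤ (m : ℝ) / 2 ^ T) ∧
      ∀ q, |∑ i, f (y i) q - ∑ i ∈ S, w i * f (y i) q| ≤
        c * Real.sqrt m * ∑ t ∈ range T, Real.sqrt 2 ^ t := by
  intro T
  induction T with
  | zero =>
    intro m y
    refine ⟨univ, fun _ => 1, fun _ => zero_le_one, by simp, by simp⟩
  | succ T ih =>
    intro m y
    classical
    obtain ⟨σ, hσ, hσb⟩ := hdisc m y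
    set P : Finset (Fin m) := univ.filter (fun i => σ i = 1) with hPdef
    set N : Finset (Fin m) := univ.filter (fun i => ¬ σ i = 1) with hNdef
    have hPN : P.card + N.card = m := by
      simpa using Finset.card_filter_add_card_filter_not
        (s := (univ : Finset (Fin m))) (p := fun i => σ i = 1)
    have hsum_split : ∀ q, ∑ i, f (y i) q = ∑ i ∈ P, f (y i) q + ∑ i ∈ N, f (y i) q := by
      intro q
      exact (Finset.sum_filter_add_sum_filter_not univ (fun i => σ i = 1)
        (fun i => f (y i) q)).symm
    have hsig : ∀ q, ∑ i, σ i * f (y i) q = ∑ i ∈ P, f (y i) q - ∑ i ∈ N, f (y i) q := by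
      intro q
      rw [← Finset.sum_filter_add_sum_filter_not univ (fun i => σ i = 1)
        (fun i => σ i * f (y i) q)]
      have h1 : ∑ i ∈ P, σ i * f (y i) q = ∑ i ∈ P, f (y i) q := by
        refine Finset.sum_congr rfl fun i hi => ?_
        have : σ i = 1 := (Finset.mem_filter.mp hi).2
        rw [this, one_mul]
      have h2 : ∑ i ∈ N, σ i * f (y i) q = -∑ i ∈ N, f (y i) q := by
        rw [← Finset.sum_neg_distrib]
        refine Finset.sum_congr rfl fun i hi => ?_
        have hne : ¬ σ i = 1 := (Finset.mem_filter.mp hi).2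
        have : σ i = -1 := (hσ i).resolve_left hne
        rw [this]; ring
      rw [h1, h2]; ring
    -- choose the smaller half
    obtain ⟨S', hhalf, herr2⟩ :
        ∃ S' : Finset (Fin m), 2 * S'.card ≤ m ∧
          ∀ q, |∑ i, f (y i) q - 2 * ∑ i ∈ S', f (y i) q| ≤ c * Real.sqrt m := by
      rcases le_total P.card N.card with h | h
      · refine ⟨P, by omega, fun q => ?_⟩
        have : ∑ i, f (y i) q - 2 * ∑ i ∈ P, f (y i) q = -(∑ i, σ i * f (y i) q) := by
          rw [hsum_split q, hsig q]; ring
        rw [this, abs_neg]; exact hσb q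
      · refine ⟨N, by omega, fun q => ?_⟩
        have : ∑ i, f (y i) q - 2 * ∑ i ∈ N, f (y i) q = ∑ i, σ i * f (y i) q := by
          rw [hsum_split q, hsig q]; ring
        rw [this]; exact hσb q
    set m' := S'.card with hm'def
    set e : Fin m' → Fin m := fun j => ((S'.orderIsoOfFin rfl j : Fin m)) with hedef
    have einj : Function.Injective e := by
      intro a b hab
      have := (S'.orderIsoOfFin rfl).injective (Subtype.ext hab)
      exact this
    set y' : Fin m' → X := fun j => y (e j) with hy'def
    obtain ⟨S'', w'', hw'', hcard'', herr''⟩ := ih m' y'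
    refine ⟨S''.map ⟨e, einj⟩, fun i => 2 * Function.extend e w'' (fun _ => 0) i, ?_, ?_, ?_⟩
    · intro i
      dsimp only
      have h0 : 0 ≤ Function.extend e w'' (fun _ => 0) i := by
        rw [Function.extend_def]
        split
        · exact hw'' _
        · exact le_refl 0
      linarith
    · rw [Finset.card_map]
      have h1 : (m' : ℝ) ≤ (m : ℝ) / 2 := by
        have : (2 * m' : ℕ) ≤ m := hhalf
        have := (Nat.cast_le (α := ℝ)).mpr this
        push_cast at this
        linarith
      calc (S''.card : ℝ) ≤ (m' : ℝ) / 2 ^ T := hcard''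
        _ ≤ ((m : ℝ) / 2) / 2 ^ T := by
            apply div_le_div_of_nonneg_right h1 (by positivity)
        _ = (m : ℝ) / 2 ^ (T + 1) := by ring
    · intro q
      have hS'sum : ∑ j : Fin m', f (y' j) q = ∑ i ∈ S', f (y i) q := by
        rw [← Finset.sum_coe_sort S' (fun i => f (y i) q)]
        exact Fintype.sum_equiv (S'.orderIsoOfFin rfl).toEquiv _ _ (fun j => rfl)
      have hSsum : ∑ i ∈ S''.map ⟨e, einj⟩,
          (2 * Function.extend e w'' (fun _ => 0) i) * f (y i) q
          = 2 * ∑ j ∈ S'', w'' j * f (y' j) q := by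
        rw [Finset.sum_map, Finset.mul_sum]
        refine Finset.sum_congr rfl fun j hj => ?_
        simp only [Function.Embedding.coeFn_mk]
        rw [einj.extend_apply]
        ring
      have herrT := herr'' q
      have hGnn : 0 ≤ ∑ t ∈ range T, Real.sqrt 2 ^ t := by positivity
      have hsq2 : Real.sqrt 2 * Real.sqrt 2 = 2 := Real.mul_self_sqrt (by norm_num)
      have hm'le : (m' : ℝ) ≤ (m : ℝ) / 2 := by
        have : (2 * m' : ℕ) ≤ m := hhalf
        have := (Nat.cast_le (α := ℝ)).mpr this
        push_cast at this; linarith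
      have hsqrt : 2 * Real.sqrt m' ≤ Real.sqrt 2 * Real.sqrt m := by
        have h1 : Real.sqrt m' ≤ Real.sqrt ((m : ℝ) / 2) := Real.sqrt_le_sqrt hm'le
        have h2 : Real.sqrt ((m : ℝ) / 2) = Real.sqrt m / Real.sqrt 2 :=
          Real.sqrt_div (Nat.cast_nonneg m) 2
        have h3 : (0:ℝ) < Real.sqrt 2 := Real.sqrt_pos.mpr (by norm_num)
        rw [h2] at h1
        have := mul_le_mul_of_nonneg_left h1 (by norm_num : (0:ℝ) ≤ 2)
        calc 2 * Real.sqrt m' ≤ 2 * (Real.sqrt m / Real.sqrt 2) := this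
          _ = Real.sqrt 2 * Real.sqrt m := by
              field_simp
              nlinarith [Real.sqrt_nonneg (m:ℝ)]
      calc |∑ i, f (y i) q - ∑ i ∈ S''.map ⟨e, einj⟩,
              (2 * Function.extend e w'' (fun _ => 0) i) * f (y i) q|
          = |(∑ i, f (y i) q - 2 * ∑ i ∈ S', f (y i) q)
              + 2 * (∑ j : Fin m', f (y' j) q - ∑ j ∈ S'', w'' j * f (y' j) q)| := by
            rw [hSsum, hS'sum]; ring_nf
        _ ≤ |∑ i, f (y i) q - 2 * ∑ i ∈ S', f (y i) q|
              + |2 * (∑ j : Fin m', f (y' j) q - ∑ j ∈ S'', w'' j * f (y' j) q)| :=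
            abs_add_le _ _
        _ ≤ c * Real.sqrt m + 2 * (c * Real.sqrt m' * ∑ t ∈ range T, Real.sqrt 2 ^ t) := by
            have := herr2 q
            rw [abs_mul, abs_two]
            have h2 : |∑ j : Fin m', f (y' j) q - ∑ j ∈ S'', w'' j * f (y' j) q|
                ≤ c * Real.sqrt m' * ∑ t ∈ range T, Real.sqrt 2 ^ t := herrT
            nlinarith [abs_nonneg (∑ j : Fin m', f (y' j) q - ∑ j ∈ S'', w'' j * f (y' j) q)]
        _ ≤ c * Real.sqrt m + (Real.sqrt 2 * Real.sqrt m) * (c * ∑ t ∈ range T, Real.sqrt 2 ^ t) := by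
            have hcG : 0 ≤ c * ∑ t ∈ range T, Real.sqrt 2 ^ t := mul_nonneg hc hGnn
            nlinarith [Real.sqrt_nonneg (m':ℝ)]
        _ = c * Real.sqrt m * ∑ t ∈ range (T + 1), Real.sqrt 2 ^ t := by
            rw [geom_sum_succ]
            ring

set_option maxHeartbeats 800000 in
/-- Halving trick: class discrepancy `D_m ≤ c/m` yields weighted coresets of size `O(c/ε)`
with additive error `εn`. -/
theorem stmt_4 :
    ∃ C : ℝ, 0 < C ∧
      ∀ (X Q : Type) (f : X → Q → ℝ),
        (∀ x q, f x q ∈ Set.Icc (0 : ℝ) 1) →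
        ∀ c : ℝ, 0 < c →
        -- class discrepancy bound: for every m points, signs with error at most m·D_m ≤ c·√m
        (∀ (m : ℕ) (y : Fin m → X), ∃ σ : Fin m → ℝ,
            (∀ i, σ i = 1 ∨ σ i = -1) ∧
            ∀ q, |∑ i, σ i * f (y i) q| ≤ c * Real.sqrt m) →
        ∀ (ε : ℝ), 0 < ε →
        ∀ (n : ℕ) (x : Fin n → X),
          ∃ (S : Finset (Fin n)) (w : Fin n → ℝ),
            (∀ i, 0 ≤ w i) ∧
            (S.card : ℝ) ≤ C * c ^ 2 / ε ^ 2 ∧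
            ∀ q, |∑ i, f (x i) q - ∑ i ∈ S, w i * f (x i) q| ≤ ε * n := by
  classical
  refine ⟨16, by norm_num, ?_⟩
  intro X Q f hf c hc hdisc ε hε n x
  have hK : (0:ℝ) < 16 * c ^ 2 / ε ^ 2 := by positivity
  have hex : ∃ T : ℕ, (n : ℝ) / 2 ^ T ≤ 16 * c ^ 2 / ε ^ 2 := by
    obtain ⟨T, hT⟩ := pow_unbounded_of_one_lt ((n : ℝ) / (16 * c ^ 2 / ε ^ 2))
      (by norm_num : (1:ℝ) < 2)
    refine ⟨T, ?_⟩
    rw [div_le_iff₀ (by positivity)]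
    rw [div_lt_iff₀ hK] at hT
    nlinarith [pow_pos (by norm_num : (0:ℝ) < 2) T]
  set T := Nat.find hex with hTdef
  have hT : (n : ℝ) / 2 ^ T ≤ 16 * c ^ 2 / ε ^ 2 := Nat.find_spec hex
  obtain ⟨S, w, hw, hcard, herr⟩ := halving_aux f c hc.le hdisc T n x
  refine ⟨S, w, hw, le_trans hcard hT, ?_⟩
  intro q
  refine le_trans (herr q) ?_
  -- need: c * √n * ∑_{t<T} √2^t ≤ ε * n
  rcases Nat.eq_zero_or_pos T with h0 | hTpos
  · rw [h0]
    simp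
    positivity
  · obtain ⟨T', hTeq⟩ : ∃ T', T = T' + 1 := ⟨T - 1, by omega⟩
    have hmin : ¬ ((n : ℝ) / 2 ^ T' ≤ 16 * c ^ 2 / ε ^ 2) :=
      Nat.find_min hex (show T' < Nat.find hex by rw [← hTdef]; omega)
    push_neg at hmin
    rw [lt_div_iff₀ (by positivity : (0:ℝ) < 2 ^ T')] at hmin
    -- hmin : 16 * c^2 / ε^2 * 2^T' < n
    have hpow : 8 * c ^ 2 * (2 : ℝ) ^ T < (n : ℝ) * ε ^ 2 := by
      have h1 : 16 * c ^ 2 * (2:ℝ) ^ T' < (n:ℝ) * ε ^ 2 := by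
        have := mul_lt_mul_of_pos_right hmin (show (0:ℝ) < ε ^ 2 by positivity)
        calc 16 * c ^ 2 * (2:ℝ) ^ T' = 16 * c ^ 2 / ε ^ 2 * 2 ^ T' * ε ^ 2 := by
              field_simp
          _ < (n:ℝ) * ε ^ 2 := this
      have h2 : (2:ℝ) ^ T = 2 * 2 ^ T' := by rw [hTeq]; ring
      rw [h2]; linarith
    set s := Real.sqrt n with hsdef
    set t2 := Real.sqrt 2 with ht2def
    set g := t2 ^ T with hgdef
    have hs : s * s = (n:ℝ) := Real.mul_self_sqrt (Nat.cast_nonneg n)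
    have hsnn : 0 ≤ s := Real.sqrt_nonneg _
    have ht2sq : t2 * t2 = 2 := Real.mul_self_sqrt (by norm_num)
    have ht2nn : 0 ≤ t2 := Real.sqrt_nonneg _
    have ht2lb : (1.41 : ℝ) ≤ t2 := by nlinarith
    have ht2ub : t2 ≤ (1.4375 : ℝ) := by nlinarith
    have hgnn : 0 ≤ g := pow_nonneg ht2nn T
    have hgsq : g * g = (2:ℝ) ^ T := by
      rw [hgdef, ← mul_pow, ht2sq]
    have hn : (0:ℝ) < n := by nlinarith [pow_pos (show (0:ℝ) < 2 by norm_num) T]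
    set G := ∑ t ∈ range T, t2 ^ t with hGdef
    have hGnn : 0 ≤ G := by positivity
    have hGT : G * (t2 - 1) = g - 1 := geom_sum_mul t2 T
    -- squared inequality
    have hb : 0 ≤ (t2 - 1) * (ε * (n:ℝ)) := by
      apply mul_nonneg (by linarith) (by positivity)
    have hsq : (c * s * g) ^ 2 < ((t2 - 1) * (ε * (n:ℝ))) ^ 2 := by
      have e1 : (c * s * g) ^ 2 = c ^ 2 * (n:ℝ) * 2 ^ T := by
        rw [← hs, ← hgsq]; ring
      have e2 : ((t2 - 1) * (ε * (n:ℝ))) ^ 2 = (3 - 2 * t2) * (ε ^ 2 * (n:ℝ) ^ 2) := by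
        linear_combination (ε * (n:ℝ)) ^ 2 * ht2sq
      rw [e1, e2]
      nlinarith [mul_lt_mul_of_pos_right hpow hn,
        mul_nonneg (mul_nonneg (by positivity : (0:ℝ) ≤ ε ^ 2) (by positivity : (0:ℝ) ≤ (n:ℝ) ^ 2)) (by linarith : (0:ℝ) ≤ 1.4375 - t2)]
    have key : c * s * g < (t2 - 1) * (ε * (n:ℝ)) :=
      lt_of_pow_lt_pow_left₀ 2 hb hsq
    have h1 : c * s * G * (t2 - 1) = c * s * g - c * s := by
      have := congrArg (fun z => c * s * z) hGT
      linarith [this]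
    nlinarith [mul_nonneg (mul_nonneg hc.le hsnn) hGnn, mul_nonneg hc.le hsnn,
      ht2lb, key, h1]
end
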